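/- arXiv:2310.07538 — 2 statements merged into one kernel-verified Lean document; each statement's English description precedes it below -/
import Mathlib

section
/- Let A ⊂ ℝⁿ be H^s measurable with H^s(A) < ∞. Then the upper s-density θ^{*s}(A,x) = limsup_{r→0} (2r)^{−s} H^s(A ∩ B(x,r)) is at most 1 for H^s almost every x ∈ A. -/
/-!
Let `t > 1` and let `E ⊆ A` be the set where the upper density exceeds `t`. Applying the
Besicovitch covering theorem to `μ = H^s⌊A`, at every scale `δ` one finds disjoint balls
`B(x_i, r_i) ⊆ U`, `r_i < δ`, covering `μ`-almost all (hence `H^s`-almost all) of `E`, with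
`t (2 r_i)^s < μ(B_i)`. Since `diam B_i ≤ 2 r_i`, this gives `t H^s(E) ≤ μ(U)` for every open
`U ⊇ E`, and by outer regularity of the finite measure `μ`, `t H^s(E) ≤ μ(E) = H^s(E) < ∞`.
Hence `H^s(E) = 0`.
-/

open MeasureTheory Metric Filter
open scoped ENNReal Topology MeasureTheory
open Set

namespace MeasureTheory

section Covering

variable {X : Type*} [MetricSpace X]

theorem ediam_closedBall_le (x : X) {r : ℝ} (hr : 0 ≤ r) :
    ediam (closedBall x r) ≤ ENNReal.ofReal (2 * r) := by
  rw [← closedEBall_ofReal hr, ENNReal.ofReal_mul zero_le_two, ENNReal.ofReal_ofNat]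
  exact ediam_closedEBall_le

theorem ediam_closedBall_rpow_le {s : ℝ} (hs : 0 ≤ s) (x : X) {r : ℝ} (hr : 0 ≤ r) :
    ediam (closedBall x r) ^ s ≤ ENNReal.ofReal ((2 * r) ^ s) := by
  rw [← ENNReal.ofReal_rpow_of_nonneg (by positivity) hs]
  exact ENNReal.rpow_le_rpow (ediam_closedBall_le x hr) hs

variable [MeasurableSpace X] [BorelSpace X]

theorem hausdorffMeasure_le_of_forall_closedBall_cover_ae {s : ℝ} (hs : 0 ≤ s) {E : Set X}
    {c : ℝ≥0∞}
    (h : ∀ δ > 0, ∃ (T : Set X) (r : X → ℝ), T.Countable ∧ (∀ x ∈ T, r x ∈ Ioo 0 δ) ∧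
      μH[s] (E \ ⋃ x ∈ T, closedBall x (r x)) = 0 ∧
      ∑' x : T, ENNReal.ofReal ((2 * r x) ^ s) ≤ c) :
    μH[s] E ≤ c := by
  choose T r hTc hr hnull hsum using fun m : ℕ => h (1 / (m + 1)) Nat.one_div_pos_of_nat
  have := fun m => (hTc m).to_subtype
  set N := ⋃ m, E \ ⋃ x ∈ T m, closedBall x (r m x)
  have hcover : ∀ m, E \ N ⊆ ⋃ x : T m, closedBall (x : X) (r m x) := by
    intro m x hx
    by_contra hx'
    exact hx.2 (mem_iUnion.2 ⟨m, hx.1, by simpa only [iUnion_subtype] using hx'⟩)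
  have hdiam : ∀ m, ∀ x : T m,
      ediam (closedBall (x : X) (r m x)) ≤ ENNReal.ofReal (2 * (1 / (m + 1))) := fun m x =>
    (ediam_closedBall_le _ (hr m x x.2).1.le).trans
      (ENNReal.ofReal_le_ofReal (by linarith [(hr m x x.2).2]))
  have hδ : Tendsto (fun m : ℕ => ENNReal.ofReal (2 * (1 / (m + 1)))) atTop (𝓝 0) := by
    simpa using ENNReal.tendsto_ofReal (tendsto_one_div_add_atTop_nhds_zero_nat.const_mul 2)
  calc μH[s] E = μH[s] (E \ N) := (measure_sdiff_null (measure_iUnion_null hnull)).symm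
    _ ≤ liminf (fun m => ∑' x : T m, ediam (closedBall (x : X) (r m x)) ^ s) atTop :=
      Measure.hausdorffMeasure_le_liminf_tsum s _ _ hδ _ (.of_forall hdiam) (.of_forall hcover)
    _ ≤ c := liminf_le_of_frequently_le' <| .of_forall fun m =>
      (ENNReal.tsum_le_tsum fun x : T m => ediam_closedBall_rpow_le hs _ (hr m x x.2).1.le).trans
        (hsum m)

variable [SecondCountableTopology X] [HasBesicovitchCovering X]

theorem exists_closedBall_cover_ae_mul_tsum_le {s : ℝ} (μ : Measure X) [SFinite μ] (t : ℝ≥0∞)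
    {E U : Set X}
    (hE : ∀ x ∈ E, ∃ᶠ r in 𝓝[>] 0, t * ENNReal.ofReal ((2 * r) ^ s) < μ (closedBall x r))
    (hU : IsOpen U) (hEU : E ⊆ U) {δ : ℝ} (hδ : 0 < δ) :
    ∃ (T : Set X) (r : X → ℝ), T.Countable ∧ (∀ x ∈ T, r x ∈ Ioo 0 δ) ∧
      μ (E \ ⋃ x ∈ T, closedBall x (r x)) = 0 ∧
      t * ∑' x : T, ENNReal.ofReal ((2 * r x) ^ s) ≤ μ U := by
  have hR : ∀ x ∈ E, ∃ R > 0, closedBall x R ⊆ U := fun x hx =>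
    nhds_basis_closedBall.mem_iff.1 (hU.mem_nhds (hEU hx))
  choose! R hR₀ hRU using hR
  obtain ⟨T, r, hTc, hTE, hr, hnull, hdisj⟩ := Besicovitch.exists_disjoint_closedBall_covering_ae μ
    (fun x => {r | t * ENNReal.ofReal ((2 * r) ^ s) < μ (closedBall x r)}) E
    (fun x hx δ hδ => ((hE x hx).and_eventually (Ioo_mem_nhdsGT hδ)).exists)
    (fun x => min (R x) δ) (fun x hx => lt_min (hR₀ x hx) hδ)
  have := hTc.to_subtype
  refine ⟨T, r, hTc, fun x hx => ⟨(hr x hx).2.1, (hr x hx).2.2.trans_le (min_le_right _ _)⟩,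
    hnull, ?_⟩
  calc t * ∑' x : T, ENNReal.ofReal ((2 * r x) ^ s)
      = ∑' x : T, t * ENNReal.ofReal ((2 * r x) ^ s) := ENNReal.tsum_mul_left.symm
    _ ≤ ∑' x : T, μ (closedBall x (r x)) := ENNReal.tsum_le_tsum fun x => (hr x x.2).1.le
    _ = μ (⋃ x : T, closedBall x (r x)) :=
      (measure_iUnion (hdisj.subtype _ _) fun _ => measurableSet_closedBall).symm
    _ ≤ μ U := measure_mono <| iUnion_subset fun x =>
      (closedBall_subset_closedBall ((hr x x.2).2.2.le.trans (min_le_left _ _))).trans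
        (hRU x (hTE x.2))

theorem mul_hausdorffMeasure_le_of_frequently_lt {s : ℝ} (hs : 0 ≤ s) (μ : Measure X) [SFinite μ]
    {t : ℝ≥0∞} (ht₀ : t ≠ 0) (ht : t ≠ ∞) {E U : Set X} (hEμ : μH[s].restrict E ≪ μ)
    (hE : ∀ x ∈ E, ∃ᶠ r in 𝓝[>] 0, t * ENNReal.ofReal ((2 * r) ^ s) < μ (closedBall x r))
    (hU : IsOpen U) (hEU : E ⊆ U) :
    t * μH[s] E ≤ μ U := by
  rw [mul_comm, ← ENNReal.le_div_iff_mul_le (.inl ht₀) (.inl ht)]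
  refine hausdorffMeasure_le_of_forall_closedBall_cover_ae hs fun δ hδ => ?_
  obtain ⟨T, r, hTc, hr, hnull, hsum⟩ := exists_closedBall_cover_ae_mul_tsum_le μ t hE hU hEU hδ
  refine ⟨T, r, hTc, hr, ?_, ?_⟩
  · rw [← Measure.restrict_eq_self μH[s] sdiff_subset]
    exact hEμ hnull
  · rwa [ENNReal.le_div_iff_mul_le (.inl ht₀) (.inl ht), mul_comm]

end Covering

section UpperDensity

variable {X : Type*} [MetricSpace X] [MeasurableSpace X]

/-- `θ^{*s}(A, x)` is `upperDensity (μH[s].restrict A) s x`. -/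
noncomputable def upperDensity (μ : Measure X) (s : ℝ) (x : X) : ℝ≥0∞ :=
  limsup (fun r : ℝ => μ (closedBall x r) / ENNReal.ofReal ((2 * r) ^ s)) (𝓝[>] 0)

theorem frequently_mul_lt_measure_closedBall_of_lt_upperDensity {μ : Measure X} {s : ℝ} {x : X}
    {t : ℝ≥0∞} (h : t < upperDensity μ s x) :
    ∃ᶠ r in 𝓝[>] 0, t * ENNReal.ofReal ((2 * r) ^ s) < μ (closedBall x r) := by
  refine ((frequently_lt_of_lt_limsup (by isBoundedDefault) h).and_eventually
    self_mem_nhdsWithin).mono ?_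
  rintro r ⟨hr, hr₀ : 0 < r⟩
  rwa [ENNReal.lt_div_iff_mul_lt (.inl (ENNReal.ofReal_pos.2 (by positivity)).ne')
    (.inl ENNReal.ofReal_ne_top)] at hr

variable [BorelSpace X] [SecondCountableTopology X] [HasBesicovitchCovering X]

theorem mul_hausdorffMeasure_le_of_lt_upperDensity {s : ℝ} (hs : 0 ≤ s) (μ : Measure X)
    [IsFiniteMeasure μ] {t : ℝ≥0∞} (ht₀ : t ≠ 0) (ht : t ≠ ∞) {E : Set X}
    (hEμ : μH[s].restrict E ≪ μ) (hE : ∀ x ∈ E, t < upperDensity μ s x) :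
    t * μH[s] E ≤ μ E := by
  rw [E.measure_eq_iInf_isOpen μ]
  exact le_iInf₂ fun U hEU => le_iInf fun hU => mul_hausdorffMeasure_le_of_frequently_lt hs μ ht₀ ht
    hEμ (fun x hx => frequently_mul_lt_measure_closedBall_of_lt_upperDensity (hE x hx)) hU hEU

theorem ae_upperDensity_hausdorffMeasure_restrict_le {s : ℝ} (hs : 0 ≤ s) {A : Set X}
    (hA : MeasurableSet A) (hfin : μH[s] A ≠ ∞) {t : ℝ≥0∞} (ht₁ : 1 < t) (ht : t ≠ ∞) :
    ∀ᵐ x ∂μH[s].restrict A, upperDensity (μH[s].restrict A) s x ≤ t := by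
  have := isFiniteMeasure_restrict.2 hfin
  set E := {x | t < upperDensity (μH[s].restrict A) s x} ∩ A
  have hEA : E ⊆ A := inter_subset_right
  have hEfin : μH[s] E ≠ ∞ := ne_top_of_le_ne_top hfin (measure_mono hEA)
  have hE : t * μH[s] E ≤ 1 * μH[s] E :=
    calc t * μH[s] E ≤ μH[s].restrict A E :=
          mul_hausdorffMeasure_le_of_lt_upperDensity hs _ (zero_lt_one.trans ht₁).ne' ht
            (Measure.absolutelyContinuous_of_le (Measure.restrict_mono hEA le_rfl))
            fun x hx => hx.1
      _ = 1 * μH[s] E := by rw [one_mul, Measure.restrict_eq_self μH[s] hEA]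
  have hE₀ : μH[s] E = 0 := by
    by_contra hE₀
    exact ht₁.not_ge ((ENNReal.mul_le_mul_iff_left hE₀ hEfin).1 hE)
  simpa only [ae_iff, not_le, Measure.restrict_apply' hA] using hE₀

theorem ae_upperDensity_hausdorffMeasure_restrict_le_one {s : ℝ} (hs : 0 ≤ s) {A : Set X}
    (hA : MeasurableSet A) (hfin : μH[s] A ≠ ∞) :
    ∀ᵐ x ∂μH[s].restrict A, upperDensity (μH[s].restrict A) s x ≤ 1 := by
  have hlim : Tendsto (fun k : ℕ => 1 + ((k : ℝ≥0∞) + 1)⁻¹) atTop (𝓝 1) := by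
    simpa using tendsto_const_nhds.add
      ((tendsto_add_atTop_iff_nat 1).2 ENNReal.tendsto_inv_nat_nhds_zero)
  have hle := ae_all_iff.2 fun k : ℕ => ae_upperDensity_hausdorffMeasure_restrict_le hs hA hfin
    (t := 1 + ((k : ℝ≥0∞) + 1)⁻¹) (ENNReal.lt_add_right ENNReal.one_ne_top (by simp)) (by simp)
  exact hle.mono fun x hx => ge_of_tendsto' hlim hx

end UpperDensity

end MeasureTheory

/-- If `A ⊂ ℝⁿ` is `H^s` measurable with `H^s(A) < ∞`, then the upper `s`-density
`θ^{*s}(A,x) = limsup_{r→0} (2r)^{−s} H^s(A ∩ B(x,r))` is at most `1` for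
`H^s` almost every `x ∈ A`. -/
theorem stmt6 {n : ℕ} (s : ℝ) (hs : 0 ≤ s) (A : Set (EuclideanSpace ℝ (Fin n)))
    (hA : MeasurableSet A) (hfin : μH[s] A < ⊤) :
    ∀ᵐ x ∂(μH[s].restrict A),
      limsup (fun r : ℝ =>
          μH[s] (A ∩ closedBall x r) / ENNReal.ofReal ((2 * r) ^ s)) (𝓝[>] 0) ≤ 1 := by
  filter_upwards [ae_upperDensity_hausdorffMeasure_restrict_le_one hs hA hfin.ne] with x hx
  simpa only [upperDensity, Measure.restrict_apply measurableSet_closedBall, inter_comm] using hx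
end

section
/- Let A ⊂ ℝⁿ be H^s measurable with 0 < H^s(A) < ∞ and s > m, let P : ℝⁿ → ℝᵐ be an orthogonal projection (linear surjection with P∘Pᵀ = id). Then for Lebesgue almost every u ∈ ℝᵐ, the Hausdorff dimension of the fiber P^{−1}{u} ∩ A is at most s − m. -/
/-!
If `μH[s] A < ∞` and `s' > s`, then `μH[s'] A = 0`, so `A` has countable covers `Eᵢ` of
arbitrarily small mesh with `∑ diam (Eᵢ) ^ s'` arbitrarily small. The fibre over `u` is
covered by those `Eᵢ` with `u ∈ closure (P '' Eᵢ)`, hence `μH[s' - m] (P⁻¹{u} ∩ A)` is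
at most `liminf ∑ᵢ 𝟙[u ∈ closure (P '' Eᵢ)] diam (Eᵢ) ^ (s' - m)`. Since `P` is Lipschitz,
`vol (closure (P '' Eᵢ)) ≲ diam (Eᵢ) ^ m`, so the integral in `u` of the right-hand side
is `≲ ∑ diam (Eᵢ) ^ s'`, and Fatou's lemma makes the liminf vanish for a.e. `u`. Letting
`s'` decrease to `s` along a sequence bounds the dimension of a.e. fibre by `s - m`.
-/

open MeasureTheory Metric Filter Set Module
open scoped ENNReal Topology MeasureTheory

section

variable {X : Type*} [EMetricSpace X]

/-- Weighting by the closures of the images keeps `u ↦ fiberCoverWeight f E t u` measurable. -/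
noncomputable def fiberCoverWeight {Y : Type*} [TopologicalSpace Y] (f : X → Y)
    (E : ℕ → Set X) (t : ℝ) (u : Y) : ℝ≥0∞ :=
  ∑' i, (closure (f '' E i)).indicator (fun _ => ediam (E i) ^ t) u

theorem measurable_fiberCoverWeight {Y : Type*} [TopologicalSpace Y] [MeasurableSpace Y]
    [OpensMeasurableSpace Y] (f : X → Y) (E : ℕ → Set X) (t : ℝ) :
    Measurable (fiberCoverWeight f E t) :=
  Measurable.tsum fun _ => measurable_const.indicator isClosed_closure.measurableSet

variable {F : Type*} [NormedAddCommGroup F] [NormedSpace ℝ F] [FiniteDimensional ℝ F]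
  [MeasurableSpace F] [BorelSpace F] (μ : Measure F) [μ.IsAddHaarMeasure]

theorem MeasureTheory.Measure.addHaar_le_mul_ediam_pow {s : Set F} (hs : ediam s ≠ ∞) :
    μ s ≤ μ (closedBall 0 1) * ediam s ^ finrank ℝ F := by
  rcases s.eq_empty_or_nonempty with rfl | ⟨x, hx⟩
  · simp
  have hsub : s ⊆ closedBall x (ediam s).toReal := fun y hy => by
    rw [mem_closedBall, dist_edist]
    exact ENNReal.toReal_mono hs (edist_le_ediam_of_mem hy hx)
  calc μ s ≤ μ (closedBall x (ediam s).toReal) := measure_mono hsub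
    _ = μ (closedBall 0 1) * ediam s ^ finrank ℝ F := by
      rw [Measure.addHaar_closedBall' μ x ENNReal.toReal_nonneg, mul_comm,
        ENNReal.ofReal_pow ENNReal.toReal_nonneg, ENNReal.ofReal_toReal hs]

theorem lintegral_fiberCoverWeight_le {f : X → F} {K : NNReal} (hf : LipschitzWith K f)
    {E : ℕ → Set X} (hE : ∀ i, ediam (E i) ≠ ∞) {t : ℝ} (ht : 0 ≤ t) :
    ∫⁻ u, fiberCoverWeight f E t u ∂μ ≤
      μ (closedBall 0 1) * K ^ finrank ℝ F * ∑' i, ediam (E i) ^ (finrank ℝ F + t) := by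
  unfold fiberCoverWeight
  rw [lintegral_tsum fun i =>
    (measurable_const.indicator isClosed_closure.measurableSet).aemeasurable,
    ← ENNReal.tsum_mul_left]
  refine ENNReal.tsum_le_tsum fun i => ?_
  have himage : ediam (closure (f '' E i)) ≤ K * ediam (E i) :=
    (ediam_closure _).trans_le (hf.ediam_image_le _)
  have himage_ne_top : ediam (closure (f '' E i)) ≠ ∞ :=
    ne_top_of_le_ne_top (ENNReal.mul_ne_top ENNReal.coe_ne_top (hE i)) himage
  rw [lintegral_indicator_const isClosed_closure.measurableSet,
    ENNReal.rpow_add_of_nonneg _ _ (Nat.cast_nonneg _) ht, ENNReal.rpow_natCast]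
  calc ediam (E i) ^ t * μ (closure (f '' E i))
      ≤ ediam (E i) ^ t * (μ (closedBall 0 1) * (K * ediam (E i)) ^ finrank ℝ F) := by
        gcongr
        exact (Measure.addHaar_le_mul_ediam_pow μ himage_ne_top).trans (by gcongr)
    _ = _ := by ring

variable [MeasurableSpace X] [BorelSpace X]

theorem MeasureTheory.Measure.exists_cover_tsum_ediam_rpow_lt {d : ℝ} (hd : 0 < d)
    {A : Set X} (hA : μH[d] A = 0) {r ε : ℝ≥0∞} (hr : 0 < r) (hε : 0 < ε) :
    ∃ E : ℕ → Set X,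
      A ⊆ ⋃ i, E i ∧ (∀ i, ediam (E i) ≤ r) ∧ ∑' i, ediam (E i) ^ d < ε := by
  rw [Measure.hausdorffMeasure_apply, ENNReal.iSup_eq_zero] at hA
  have hlt := (ENNReal.iSup_eq_zero.1 (hA r) hr).symm ▸ hε
  simp only [iInf_lt_iff] at hlt
  obtain ⟨E, hcov, hdiam, hsum⟩ := hlt
  refine ⟨E, hcov, hdiam, lt_of_eq_of_lt (tsum_congr fun i => ?_) hsum⟩
  rcases (E i).eq_empty_or_nonempty with h | h
  · simp [h, ENNReal.zero_rpow_of_pos hd]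
  · rw [iSup_pos h]

theorem dimH_le_ofReal_of_hausdorffMeasure_eq_zero {s : Set X} {d : ℝ} (hd : 0 ≤ d)
    (h : μH[d] s = 0) : dimH s ≤ ENNReal.ofReal d := by
  lift d to NNReal using hd
  simpa using dimH_le_of_hausdorffMeasure_ne_top (by simp [h])

theorem hausdorffMeasure_fiber_le_liminf_fiberCoverWeight {Y : Type*} [TopologicalSpace Y]
    {f : X → Y} {A : Set X} {E : ℕ → ℕ → Set X} {r : ℕ → ℝ≥0∞}
    (hr : Tendsto r atTop (𝓝 0)) (hdiam : ∀ k i, ediam (E k i) ≤ r k)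
    (hcov : ∀ k, A ⊆ ⋃ i, E k i) (t : ℝ) (u : Y) :
    μH[t] (f ⁻¹' {u} ∩ A) ≤ liminf (fun k => fiberCoverWeight f (E k) t u) atTop := by
  let hits (k : ℕ) : Set ℕ := {i | u ∈ closure (f '' E k i)}
  convert Measure.hausdorffMeasure_le_liminf_tsum t _ r hr (fun k (i : hits k) => E k i)
    (Eventually.of_forall fun k i => hdiam k i) (Eventually.of_forall fun k x hx => ?_) using 3
  · exact (tsum_subtype (hits _) fun i => ediam (E _ i) ^ t).symm
  · obtain ⟨i, hi⟩ := mem_iUnion.1 (hcov k hx.2)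
    exact mem_iUnion.2 ⟨⟨i, subset_closure ⟨x, hi, hx.1⟩⟩, hi⟩

theorem LipschitzWith.ae_hausdorffMeasure_fiber_eq_zero {f : X → F} {K : NNReal}
    (hf : LipschitzWith K f) {s : ℝ} (hs : (finrank ℝ F : ℝ) < s) {A : Set X}
    (hA : μH[s] A = 0) :
    ∀ᵐ u ∂μ, μH[s - finrank ℝ F] (f ⁻¹' {u} ∩ A) = 0 := by
  set t := s - finrank ℝ F
  have hε : ∀ k : ℕ, (0 : ℝ≥0∞) < 2⁻¹ ^ k := fun k => ENNReal.pow_pos (by norm_num) k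
  choose E hcov hdiam hsum using fun k =>
    Measure.exists_cover_tsum_ediam_rpow_lt ((Nat.cast_nonneg _).trans_lt hs) hA (hε k) (hε k)
  have hr : Tendsto (fun k : ℕ => (2⁻¹ : ℝ≥0∞) ^ k) atTop (𝓝 0) :=
    ENNReal.tendsto_pow_atTop_nhds_zero_of_lt_one (by norm_num)
  set C := μ (closedBall 0 1) * K ^ finrank ℝ F
  have hint (k : ℕ) : ∫⁻ u, fiberCoverWeight f (E k) t u ∂μ ≤ C * 2⁻¹ ^ k := by
    have hE i : ediam (E k i) ≠ ∞ := ne_top_of_le_ne_top (by simp) (hdiam k i)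
    refine (lintegral_fiberCoverWeight_le μ hf hE (by linarith)).trans ?_
    rw [add_sub_cancel]
    gcongr
    exact (hsum k).le
  have hC : C ≠ ∞ := ENNReal.mul_ne_top measure_closedBall_lt_top.ne (by simp)
  have hliminf : ∫⁻ u, liminf (fun k => fiberCoverWeight f (E k) t u) atTop ∂μ = 0 := by
    refine le_antisymm ?_ zero_le
    calc _ ≤ liminf (fun k => ∫⁻ u, fiberCoverWeight f (E k) t u ∂μ) atTop :=
          lintegral_liminf_le fun k => measurable_fiberCoverWeight f (E k) t
      _ ≤ liminf (fun k : ℕ => C * 2⁻¹ ^ k) atTop := liminf_le_liminf (.of_forall hint)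
      _ = 0 := by simpa using (ENNReal.Tendsto.const_mul hr (.inr hC)).liminf_eq
  filter_upwards [(lintegral_eq_zero_iff
    (Measurable.liminf fun k => measurable_fiberCoverWeight f (E k) t)).1 hliminf] with u hu
  exact le_antisymm
    ((hausdorffMeasure_fiber_le_liminf_fiberCoverWeight hr hdiam hcov t u).trans_eq hu)
    zero_le

end

theorem stmt7_general {n m : ℕ} (s : ℝ) (hms : (m : ℝ) < s)
    (A : Set (EuclideanSpace ℝ (Fin n)))
    (hfin : μH[s] A < ⊤)
    (P : EuclideanSpace ℝ (Fin n) →L[ℝ] EuclideanSpace ℝ (Fin m)) :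
    ∀ᵐ u ∂(volume : Measure (EuclideanSpace ℝ (Fin m))),
      dimH (P ⁻¹' {u} ∩ A) ≤ ENNReal.ofReal (s - m) := by
  have hslice (k : ℕ) : ∀ᵐ u ∂(volume : Measure (EuclideanSpace ℝ (Fin m))),
      μH[s + 1 / (k + 1) - m] (P ⁻¹' {u} ∩ A) = 0 := by
    have hlt : s < s + 1 / (k + 1) := lt_add_of_pos_right s Nat.one_div_pos_of_nat
    have hA : μH[s + 1 / (k + 1)] A = 0 :=
      (Measure.hausdorffMeasure_zero_or_top hlt A).resolve_right hfin.ne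
    simpa only [finrank_euclideanSpace_fin] using
      P.lipschitz.ae_hausdorffMeasure_fiber_eq_zero volume (by simpa using hms.trans hlt) hA
  filter_upwards [ae_all_iff.2 hslice] with u hu
  have hlim : Tendsto (fun k : ℕ => ENNReal.ofReal (s + 1 / (k + 1) - m)) atTop
      (𝓝 (ENNReal.ofReal (s - m))) := by
    refine ENNReal.tendsto_ofReal ?_
    simpa using ((tendsto_one_div_add_atTop_nhds_zero_nat).const_add s).sub_const (m : ℝ)
  refine ge_of_tendsto' hlim fun k => dimH_le_ofReal_of_hausdorffMeasure_eq_zero ?_ (hu k)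
  linarith [Nat.one_div_pos_of_nat (α := ℝ) (n := k)]

/-- If `A ⊂ ℝⁿ` is `H^s` measurable with `0 < H^s(A) < ∞`, `s > m`, and
`P : ℝⁿ → ℝᵐ` is an orthogonal projection (`P ∘ Pᵀ = id`), then for Lebesgue almost
every `u ∈ ℝᵐ` the fiber `P⁻¹{u} ∩ A` has Hausdorff dimension at most `s − m`. -/
theorem stmt7 {n m : ℕ} (s : ℝ) (hms : (m : ℝ) < s)
    (A : Set (EuclideanSpace ℝ (Fin n))) (hA : MeasurableSet A)
    (h0 : 0 < μH[s] A) (hfin : μH[s] A < ⊤)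
    (P : EuclideanSpace ℝ (Fin n) →L[ℝ] EuclideanSpace ℝ (Fin m))
    (hP : P ∘L ContinuousLinearMap.adjoint P
      = ContinuousLinearMap.id ℝ (EuclideanSpace ℝ (Fin m))) :
    ∀ᵐ u ∂(volume : Measure (EuclideanSpace ℝ (Fin m))),
      dimH (P ⁻¹' {u} ∩ A) ≤ ENNReal.ofReal (s - m) :=
  stmt7_general s hms A hfin P
end
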